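/- arXiv:2206.04989 — 7 statements merged into one kernel-verified Lean document; each statement's English description precedes it below -/
import Mathlib

section
/- Let μ > 0, k > 0, ϑ ≥ ν ≥ 0 with ϑ > 0, ℓ₀ ∈ (0,1), α* ∈ (0,1), and constants α_ℓ, α_u with 0 < α_ℓ ≤ α_u < 1. Suppose α, u : [0,∞) × [0,1] → ℝ and ℓ : [0,∞) → [ℓ₀, 1) are such that for every t ≥ 0: the maps x ↦ α(t,x) and x ↦ u(t,x) are continuously differentiable on [0, ℓ(t)] and x ↦ α(t,x)·∂ₓu(t,x) is differentiable there; the momentum balance −μ ∂ₓ(α ∂ₓu) + k α u/(1−α) = −∂ₓ(α Σ(α)) holds on (0, ℓ(t)); u(t,0) = 0; the stress boundary condition μ ∂ₓu(t,ℓ(t)) − Σ(α(t,ℓ(t))) = σ^H(ℓ(t)) holds; α_ℓ ≤ α(t,x) ≤ α_u for all x ∈ [0, ℓ(t)]; and ℓ is differentiable with dℓ/dt(t) = u(t, ℓ(t)) ≥ 0. Then the growth rate vanishes as the tumour length approaches the domain boundary: for every ε > 0 there exists δ > 0 such that for all t ≥ 0, if ℓ(t) > 1 − δ then 0 ≤ dℓ/dt(t)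 < ε. -/
/-!
Near `ℓ = 1` the hydrogel stress tends to `-∞`, so at the free boundary the weighted stress
`F = α (μ ∂ₓu − Σ(α))` lies below `-αu Σ(αu)`. Suppose `u(ℓ) > 0`. Beyond the last point where
`u ≤ 0`, the mean value theorem gives `ξ` with `∂ₓu(ξ) > 0`, hence `F(ξ) > -αu Σ(αu)`. On `[ξ, ℓ]`
the momentum balance reads `∂ₓF = k α u / (1 − α) > 0`, so `F(ξ) ≤ F(ℓ)`, a contradiction.
Thus `u(ℓ) = 0`, and the growth rate is exactly zero once `ℓ` is close enough to `1`.
-/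

/-- Cell–cell interaction pressure `Σ(α) = (α − α*)⁺ / (1 − α)²`. -/
noncomputable def cellPressure (αstar a : ℝ) : ℝ := max (a - αstar) 0 / (1 - a) ^ 2

/-- Dimensionless hydrogel stress `σ^H(ℓ) = ν(1−ℓ)/(1−ℓ₀) − ϑ(1−ℓ₀)/(1−ℓ)`. -/
noncomputable def hydrogelStress (ν ϑ ℓ₀ ℓ : ℝ) : ℝ :=
  ν * (1 - ℓ) / (1 - ℓ₀) - ϑ * (1 - ℓ₀) / (1 - ℓ)

open Filter Set Topology

lemma cellPressure_nonneg (αstar a : ℝ) : 0 ≤ cellPressure αstar a :=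
  div_nonneg (le_max_right _ _) (sq_nonneg _)

lemma cellPressure_monotoneOn (αstar : ℝ) : MonotoneOn (cellPressure αstar) (Iio 1) :=
  fun a _ b hb hab => div_le_div₀ (le_max_right _ _) (max_le_max_right 0 (sub_le_sub_right hab _))
    (pow_pos (sub_pos.mpr hb) 2) (by nlinarith [mem_Iio.mp hb])

lemma continuousOn_cellPressure (αstar : ℝ) : ContinuousOn (cellPressure αstar) (Iio 1) :=
  ContinuousOn.div (by fun_prop) (by fun_prop) fun _ ha =>
    pow_ne_zero 2 (sub_ne_zero.mpr (ne_of_lt ha).symm)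

lemma tendsto_hydrogelStress_nhdsLT_one {ν ϑ ℓ₀ : ℝ} (hϑ : 0 < ϑ) (hℓ₀ : ℓ₀ < 1) :
    Tendsto (hydrogelStress ν ϑ ℓ₀) (𝓝[<] 1) atBot := by
  have hgap : Tendsto (fun ℓ : ℝ => 1 - ℓ) (𝓝[<] 1) (𝓝[>] 0) := by
    refine tendsto_nhdsWithin_of_tendsto_nhds_of_eventually_within _ ?_ ?_
    · simpa using (continuous_sub_left (1 : ℝ)).continuousWithinAt.tendsto (x := 1) (s := Iio 1)
    · filter_upwards [self_mem_nhdsWithin] with ℓ hℓ using sub_pos.mpr (mem_Iio.mp hℓ)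
  have hhydro : Tendsto (fun ℓ : ℝ => ϑ * (1 - ℓ₀) / (1 - ℓ)) (𝓝[<] 1) atTop := by
    simpa only [div_eq_mul_inv, Function.comp_def] using
      (tendsto_inv_nhdsGT_zero.comp hgap).const_mul_atTop (mul_pos hϑ (sub_pos.mpr hℓ₀))
  have hlin : Tendsto (fun ℓ : ℝ => ν * (1 - ℓ) / (1 - ℓ₀)) (𝓝[<] 1)
      (𝓝 (ν * (1 - 1) / (1 - ℓ₀))) :=
    ((continuous_const.mul (continuous_sub_left 1)).div_const _).continuousWithinAt.tendsto
  exact hlin.add_atBot (tendsto_neg_atTop_atBot.comp hhydro)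

lemma HasDerivAt.max_zero_of_eq_zero {g : ℝ → ℝ} {x : ℝ} (hg : HasDerivAt g 0 x) (hx : g x = 0) :
    HasDerivAt (fun y => max (g y) 0) 0 x := by
  rw [hasDerivAt_iff_isLittleO] at hg ⊢
  simp only [smul_zero, sub_zero, hx, max_self] at hg ⊢
  refine (Asymptotics.isBigO_of_le _ fun y => ?_).trans_isLittleO hg
  rw [Real.norm_eq_abs, Real.norm_eq_abs, abs_of_nonneg (le_max_right _ _)]
  exact max_le (le_abs_self _) (abs_nonneg _)

lemma DifferentiableAt.max_zero {g : ℝ → ℝ} {x : ℝ} (hg : DifferentiableAt ℝ g x)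
    (h : g x ≠ 0 ∨ deriv g x = 0) : DifferentiableAt ℝ (fun y => max (g y) 0) x := by
  by_cases hx : g x = 0
  · have hg' : HasDerivAt g 0 x := h.resolve_left (not_not.mpr hx) ▸ hg.hasDerivAt
    exact (hg'.max_zero_of_eq_zero hx).differentiableAt
  · have hmax : (fun y => max (g y) 0) = fun y => (g y + |g y|) / 2 := by
      ext y
      rcases le_total (g y) 0 with hy | hy
      · rw [max_eq_right hy, abs_of_nonpos hy]; ring
      · rw [max_eq_left hy, abs_of_nonneg hy]; ring
    rw [hmax]
    exact (hg.add (hg.abs hx)).div_const 2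

lemma DifferentiableAt.mul_cellPressure {a : ℝ → ℝ} {αstar x : ℝ} (ha : DifferentiableAt ℝ a x)
    (ha1 : a x ≠ 1) (h : a x ≠ αstar ∨ deriv a x = 0) :
    DifferentiableAt ℝ (fun y => a y * cellPressure αstar (a y)) x := by
  have hpos : DifferentiableAt ℝ (fun y => max (a y - αstar) 0) x :=
    (ha.sub_const αstar).max_zero (by rwa [sub_ne_zero, deriv_sub_const])
  exact ha.mul (hpos.div (by fun_prop) (pow_ne_zero 2 (sub_ne_zero.mpr (Ne.symm ha1))))

lemma HasDerivAt.eventually_lt_nhdsGT {f : ℝ → ℝ} {f' x : ℝ} (hf : HasDerivAt f f' x)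
    (hf' : 0 < f') : ∀ᶠ z in 𝓝[>] x, f x < f z := by
  have hslope := (hasDerivAt_iff_tendsto_slope.mp hf).mono_left (nhdsGT_le_nhdsNE x)
  filter_upwards [hslope.eventually (eventually_gt_nhds hf'), self_mem_nhdsWithin] with z hpos hz
  rw [slope_def_field] at hpos
  exact sub_pos.mp ((div_pos_iff_of_pos_right (sub_pos.mpr hz)).mp hpos)

lemma eventually_lt_nhdsGT_of_eventually_hasDerivAt_pos {f f' : ℝ → ℝ} {x : ℝ}
    (hf : ContinuousWithinAt f (Ici x) x)
    (h : ∀ᶠ z in 𝓝[>] x, HasDerivAt f (f' z) z ∧ 0 < f' z) : ∀ᶠ z in 𝓝[>] x, f x < f z := by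
  obtain ⟨w, hxw, hw⟩ := mem_nhdsGT_iff_exists_Ioo_subset.mp h
  have hcont : ContinuousOn f (Ico x w) := by
    rintro z ⟨hxz, hzw⟩
    rcases hxz.eq_or_lt with rfl | hxz
    · exact hf.mono Ico_subset_Ici_self
    · exact (hw ⟨hxz, hzw⟩).1.continuousAt.continuousWithinAt
  have hmono : StrictMonoOn f (Ico x w) := by
    refine strictMonoOn_of_hasDerivWithinAt_pos (f' := f') (convex_Ico x w) hcont ?_ ?_ <;>
      rw [interior_Ico] <;> intro z hz
    · exact (hw hz).1.hasDerivWithinAt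
    · exact (hw hz).2
  filter_upwards [Ioo_mem_nhdsGT hxw] with z hz
  exact hmono (left_mem_Ico.mpr hxw) (Ioo_subset_Ico_self hz) hz.1

lemma DifferentiableAt.eventually_ne_nhdsGT {g : ℝ → ℝ} {c x : ℝ} (hg : DifferentiableAt ℝ g x)
    (h : g x ≠ c ∨ deriv g x ≠ 0) : ∀ᶠ z in 𝓝[>] x, g z ≠ c := by
  by_cases hx : g x = c
  · subst hx
    exact (hg.hasDerivAt.eventually_ne (h.resolve_left (not_not.mpr rfl))).filter_mono
      (nhdsGT_le_nhdsNE x)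
  · exact nhdsWithin_le_nhds (hg.continuousAt.eventually_ne hx)

lemma ContinuousOn.le_of_forall_eventually_lt_nhdsGT {f : ℝ → ℝ} {a b : ℝ} (hab : a ≤ b)
    (hf : ContinuousOn f (Icc a b)) (h : ∀ x ∈ Ico a b, ∀ᶠ z in 𝓝[>] x, f x < f z) :
    f a ≤ f b := by
  have hclosed : IsClosed (f ⁻¹' Ici (f a) ∩ Icc a b) := by
    rw [inter_comm]; exact hf.preimage_isClosed_of_isClosed isClosed_Icc isClosed_Ici
  refine hclosed.Icc_subset_of_forall_mem_nhdsWithin (le_refl (f a)) (fun x hx => ?_)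
    (right_mem_Icc.mpr hab)
  filter_upwards [h x hx.2] with z hz using le_trans hx.1 hz.le

lemma ContinuousOn.exists_deriv_pos_of_nonpos_of_pos {v : ℝ → ℝ} {a b : ℝ} (hab : a ≤ b)
    (hv : ContinuousOn v (Icc a b)) (hvd : DifferentiableOn ℝ v (Ioo a b)) (ha : v a ≤ 0)
    (hb : 0 < v b) : ∃ ξ ∈ Ioo a b, 0 < deriv v ξ ∧ ∀ z ∈ Icc ξ b, 0 < v z := by
  obtain ⟨c, ⟨⟨hac, hcb⟩, hc⟩, hcmax⟩ := (isCompact_Icc.of_isClosed_subset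
    (hv.preimage_isClosed_of_isClosed isClosed_Icc (isClosed_Iic (a := 0))) inter_subset_left
    ).exists_isGreatest ⟨a, ⟨left_mem_Icc.mpr hab, ha⟩⟩
  have hpos : ∀ z ∈ Ioc c b, 0 < v z := fun z hz =>
    lt_of_not_ge fun hz0 => hz.1.not_ge (hcmax ⟨⟨hac.trans hz.1.le, hz.2⟩, hz0⟩)
  have hcb' : c < b := hcb.lt_of_ne fun h => (h ▸ hc : v b ≤ 0).not_gt hb
  obtain ⟨ξ, hξ, hslope⟩ := exists_deriv_eq_slope v hcb' (hv.mono (Icc_subset_Icc_left hac))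
    (hvd.mono (Ioo_subset_Ioo_left hac))
  refine ⟨ξ, ⟨hac.trans_lt hξ.1, hξ.2⟩, ?_, fun z hz => hpos z ⟨hξ.1.trans_le hz.1, hz.2⟩⟩
  rw [hslope]
  exact div_pos (by linarith [show v c ≤ 0 from hc]) (sub_pos.mpr hcb')

/-- `α (μ ∂ₓu − Σ(α))`, the quantity whose `x`-derivative the momentum balance prescribes. -/
noncomputable def weightedStress (μ αstar : ℝ) (a v : ℝ → ℝ) (x : ℝ) : ℝ :=
  μ * (a x * deriv v x) - a x * cellPressure αstar (a x)

section WeightedStress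

variable {μ k αstar αl αu L : ℝ} {a v : ℝ → ℝ}

lemma ContinuousOn.weightedStress {s : Set ℝ} (ha : ContinuousOn a s)
    (hflux : ContinuousOn (fun x => a x * deriv v x) s) (ha1 : ∀ x ∈ s, a x < 1) :
    ContinuousOn (weightedStress μ αstar a v) s :=
  (continuousOn_const.mul hflux).sub
    (ha.mul ((continuousOn_cellPressure αstar).comp ha ha1))

lemma hasDerivAt_weightedStress {x : ℝ} (ha : DifferentiableAt ℝ a x) (ha1 : a x ≠ 1)
    (hflux : DifferentiableAt ℝ (fun y => a y * deriv v y) x)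
    (hmom : -μ * deriv (fun y => a y * deriv v y) x + k * a x * v x / (1 - a x)
      = -deriv (fun y => a y * cellPressure αstar (a y)) x)
    (hlevel : a x ≠ αstar ∨ deriv a x = 0) :
    HasDerivAt (weightedStress μ αstar a v) (k * a x * v x / (1 - a x)) x :=
  ((hflux.hasDerivAt.const_mul μ).sub (ha.mul_cellPressure ha1 hlevel).hasDerivAt).congr_deriv
    (by linarith)

/-- At the isolated points where `α` crosses `α*` transversally, `Σ ∘ α` is not differentiable
and the momentum balance carries no information; there we use that the derivative is positive
just to the right. -/
lemma weightedStress_le_of_pos {ξ : ℝ} (hk : 0 < k) (hαl : 0 < αl) (hαu : αu < 1)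
    (ha : DifferentiableOn ℝ a (Icc 0 L))
    (hflux : DifferentiableOn ℝ (fun x => a x * deriv v x) (Icc 0 L))
    (hmom : ∀ x ∈ Ioo 0 L, -μ * deriv (fun y => a y * deriv v y) x + k * a x * v x / (1 - a x)
      = -deriv (fun y => a y * cellPressure αstar (a y)) x)
    (hbound : ∀ x ∈ Icc 0 L, αl ≤ a x ∧ a x ≤ αu)
    (hξ : ξ ∈ Ioc 0 L) (hv : ∀ z ∈ Icc ξ L, 0 < v z) :
    weightedStress μ αstar a v ξ ≤ weightedStress μ αstar a v L := by
  have hsub : Icc ξ L ⊆ Icc 0 L := Icc_subset_Icc_left hξ.1.le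
  have hcont : ContinuousOn (weightedStress μ αstar a v) (Icc ξ L) :=
    (ha.continuousOn.weightedStress hflux.continuousOn
      fun x hx => (hbound x hx).2.trans_lt hαu).mono hsub
  have hderiv : ∀ z ∈ Ico ξ L, (a z ≠ αstar ∨ deriv a z = 0) →
      HasDerivAt (weightedStress μ αstar a v) (k * a z * v z / (1 - a z)) z ∧
        0 < k * a z * v z / (1 - a z) := by
    intro z hz hlevel
    have hz0 : z ∈ Ioo 0 L := ⟨hξ.1.trans_le hz.1, hz.2⟩
    have hnhds : Icc 0 L ∈ 𝓝 z := Icc_mem_nhds hz0.1 hz0.2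
    have ⟨hαlz, hαuz⟩ := hbound z (Ioo_subset_Icc_self hz0)
    refine ⟨hasDerivAt_weightedStress (ha.differentiableAt hnhds) (by linarith)
      (hflux.differentiableAt hnhds) (hmom z hz0) hlevel, ?_⟩
    have := hv z (Ico_subset_Icc_self hz)
    have := hαl.trans_le hαlz
    exact div_pos (by positivity) (by linarith)
  refine hcont.le_of_forall_eventually_lt_nhdsGT hξ.2 fun x hx => ?_
  by_cases hcrit : a x = αstar ∧ deriv a x = 0
  · obtain ⟨hF, hF'⟩ := hderiv x hx (Or.inr hcrit.2)
    exact hF.eventually_lt_nhdsGT hF'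
  · have hx0 : x ∈ Ioo 0 L := ⟨hξ.1.trans_le hx.1, hx.2⟩
    have hlevel : ∀ᶠ z in 𝓝[>] x, a z ≠ αstar :=
      (ha.differentiableAt (Icc_mem_nhds hx0.1 hx0.2)).eventually_ne_nhdsGT (by tauto)
    refine eventually_lt_nhdsGT_of_eventually_hasDerivAt_pos
      (f' := fun z => k * a z * v z / (1 - a z)) ?_ ?_
    · exact ((hcont x (Ico_subset_Icc_self hx)).mono_of_mem_nhdsWithin
        (mem_of_superset (Icc_mem_nhdsGE hx.2) (Icc_subset_Icc_left hx.1)))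
    · filter_upwards [hlevel, Ioo_mem_nhdsGT hx.2] with z hz hzL
      exact hderiv z ⟨hx.1.trans hzL.1.le, hzL.2⟩ (Or.inl hz)

lemma boundary_velocity_nonpos (hμ : 0 < μ) (hk : 0 < k) (hαl : 0 < αl) (hαu : αu < 1)
    (hL : 0 ≤ L) (ha : DifferentiableOn ℝ a (Icc 0 L)) (hv : DifferentiableOn ℝ v (Icc 0 L))
    (hflux : DifferentiableOn ℝ (fun x => a x * deriv v x) (Icc 0 L))
    (hmom : ∀ x ∈ Ioo 0 L, -μ * deriv (fun y => a y * deriv v y) x + k * a x * v x / (1 - a x)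
      = -deriv (fun y => a y * cellPressure αstar (a y)) x)
    (hbound : ∀ x ∈ Icc 0 L, αl ≤ a x ∧ a x ≤ αu) (hv0 : v 0 = 0)
    (hstress : weightedStress μ αstar a v L ≤ -(αu * cellPressure αstar αu)) :
    v L ≤ 0 := by
  by_contra! hvL
  obtain ⟨ξ, hξ, hvξ, hvpos⟩ := hv.continuousOn.exists_deriv_pos_of_nonpos_of_pos hL
    (hv.mono Ioo_subset_Icc_self) hv0.le hvL
  have hmono := weightedStress_le_of_pos hk hαl hαu ha hflux hmom hbound (Ioo_subset_Ioc_self hξ)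
    hvpos
  have ⟨hαlξ, hαuξ⟩ := hbound ξ (Ioo_subset_Icc_self hξ)
  have hpressure : a ξ * cellPressure αstar (a ξ) ≤ αu * cellPressure αstar αu :=
    mul_le_mul hαuξ ((cellPressure_monotoneOn αstar) (hαuξ.trans_lt hαu) hαu hαuξ)
      (cellPressure_nonneg _ _) (hαl.le.trans (hαlξ.trans hαuξ))
  have hviscous : 0 < μ * (a ξ * deriv v ξ) := by
    have := hαl.trans_le hαlξ
    positivity
  unfold weightedStress at hmono hstress
  linarith

end WeightedStress

theorem growth_rate_vanishes_near_boundary_general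
    (μ k ν ϑ ℓ₀ αstar αl αu : ℝ)
    (hμ : 0 < μ) (hk : 0 < k)
    (hϑ : 0 < ϑ)
    (hℓ₀ : ℓ₀ ∈ Set.Ioo (0 : ℝ) 1)
    (hαl : 0 < αl) (hαlu : αl ≤ αu) (hαu : αu < 1)
    (α u : ℝ → ℝ → ℝ) (ℓ ℓ' : ℝ → ℝ)
    (hℓrange : ∀ t, 0 ≤ t → ℓ t ∈ Set.Ico ℓ₀ 1)
    (hαC1 : ∀ t, 0 ≤ t → ContDiffOn ℝ 1 (α t) (Set.Icc 0 (ℓ t)))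
    (huC1 : ∀ t, 0 ≤ t → ContDiffOn ℝ 1 (u t) (Set.Icc 0 (ℓ t)))
    (hflux : ∀ t, 0 ≤ t →
      DifferentiableOn ℝ (fun x => α t x * deriv (u t) x) (Set.Icc 0 (ℓ t)))
    (hmom : ∀ t, 0 ≤ t → ∀ x ∈ Set.Ioo 0 (ℓ t),
      -μ * deriv (fun y => α t y * deriv (u t) y) x
        + k * α t x * u t x / (1 - α t x)
        = -deriv (fun y => α t y * cellPressure αstar (α t y)) x)
    (hu0 : ∀ t, 0 ≤ t → u t 0 = 0)
    (hstress : ∀ t, 0 ≤ t →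
      μ * deriv (u t) (ℓ t) - cellPressure αstar (α t (ℓ t))
        = hydrogelStress ν ϑ ℓ₀ (ℓ t))
    (hαbound : ∀ t, 0 ≤ t → ∀ x ∈ Set.Icc 0 (ℓ t), αl ≤ α t x ∧ α t x ≤ αu)
    (hℓeq : ∀ t, 0 ≤ t → ℓ' t = u t (ℓ t))
    (hℓnonneg : ∀ t, 0 ≤ t → 0 ≤ u t (ℓ t)) :
    ∀ ε > 0, ∃ δ > 0, ∀ t, 0 ≤ t → 1 - δ < ℓ t → 0 ≤ ℓ' t ∧ ℓ' t < ε := by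
  intro ε hε
  set M := αu * cellPressure αstar αu
  have hM : 0 ≤ M := mul_nonneg (hαl.le.trans hαlu) (cellPressure_nonneg _ _)
  obtain ⟨ℓc, hℓc, hnear⟩ := mem_nhdsLT_iff_exists_Ioo_subset.mp
    ((tendsto_hydrogelStress_nhdsLT_one hϑ hℓ₀.2).eventually (eventually_le_atBot (-M / αl)))
  refine ⟨1 - ℓc, sub_pos.mpr hℓc, fun t ht hℓt => ?_⟩
  have ⟨hℓ₀t, hℓt1⟩ := hℓrange t ht
  have hℓt0 : 0 ≤ ℓ t := hℓ₀.1.le.trans hℓ₀t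
  have hσ : hydrogelStress ν ϑ ℓ₀ (ℓ t) ≤ -M / αl := hnear ⟨by linarith, hℓt1⟩
  have hσ0 : hydrogelStress ν ϑ ℓ₀ (ℓ t) ≤ 0 :=
    hσ.trans (div_nonpos_of_nonpos_of_nonneg (neg_nonpos.mpr hM) hαl.le)
  have hboundary : weightedStress μ αstar (α t) (u t) (ℓ t) ≤ -M := calc
    weightedStress μ αstar (α t) (u t) (ℓ t) = α t (ℓ t) * hydrogelStress ν ϑ ℓ₀ (ℓ t) := by
      rw [← hstress t ht, weightedStress]; ring
    _ ≤ αl * hydrogelStress ν ϑ ℓ₀ (ℓ t) :=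
      mul_le_mul_of_nonpos_right (hαbound t ht (ℓ t) ⟨hℓt0, le_rfl⟩).1 hσ0
    _ ≤ αl * (-M / αl) := by gcongr
    _ = -M := mul_div_cancel₀ _ hαl.ne'
  have hstop : u t (ℓ t) = 0 := le_antisymm
    (boundary_velocity_nonpos hμ hk hαl hαu hℓt0 ((hαC1 t ht).differentiableOn one_ne_zero)
      ((huC1 t ht).differentiableOn one_ne_zero) (hflux t ht) (hmom t ht) (hαbound t ht)
      (hu0 t ht) hboundary)
    (hℓnonneg t ht)
  rw [hℓeq t ht, hstop]
  exact ⟨le_rfl, hε⟩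

/-- The tumour growth rate vanishes as the tumour length approaches the domain boundary. -/
theorem growth_rate_vanishes_near_boundary
    (μ k ν ϑ ℓ₀ αstar αl αu : ℝ)
    (hμ : 0 < μ) (hk : 0 < k)
    (hν : 0 ≤ ν) (hνϑ : ν ≤ ϑ) (hϑ : 0 < ϑ)
    (hℓ₀ : ℓ₀ ∈ Set.Ioo (0 : ℝ) 1) (hαstar : αstar ∈ Set.Ioo (0 : ℝ) 1)
    (hαl : 0 < αl) (hαlu : αl ≤ αu) (hαu : αu < 1)
    (α u : ℝ → ℝ → ℝ) (ℓ ℓ' : ℝ → ℝ)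
    (hℓrange : ∀ t, 0 ≤ t → ℓ t ∈ Set.Ico ℓ₀ 1)
    (hαC1 : ∀ t, 0 ≤ t → ContDiffOn ℝ 1 (α t) (Set.Icc 0 (ℓ t)))
    (huC1 : ∀ t, 0 ≤ t → ContDiffOn ℝ 1 (u t) (Set.Icc 0 (ℓ t)))
    (hflux : ∀ t, 0 ≤ t →
      DifferentiableOn ℝ (fun x => α t x * deriv (u t) x) (Set.Icc 0 (ℓ t)))
    (hmom : ∀ t, 0 ≤ t → ∀ x ∈ Set.Ioo 0 (ℓ t),
      -μ * deriv (fun y => α t y * deriv (u t) y) x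
        + k * α t x * u t x / (1 - α t x)
        = -deriv (fun y => α t y * cellPressure αstar (α t y)) x)
    (hu0 : ∀ t, 0 ≤ t → u t 0 = 0)
    (hstress : ∀ t, 0 ≤ t →
      μ * deriv (u t) (ℓ t) - cellPressure αstar (α t (ℓ t))
        = hydrogelStress ν ϑ ℓ₀ (ℓ t))
    (hαbound : ∀ t, 0 ≤ t → ∀ x ∈ Set.Icc 0 (ℓ t), αl ≤ α t x ∧ α t x ≤ αu)
    (hℓder : ∀ t, 0 ≤ t → HasDerivAt ℓ (ℓ' t) t)
    (hℓeq : ∀ t, 0 ≤ t → ℓ' t = u t (ℓ t))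
    (hℓnonneg : ∀ t, 0 ≤ t → 0 ≤ u t (ℓ t)) :
    ∀ ε > 0, ∃ δ > 0, ∀ t, 0 ≤ t → 1 - δ < ℓ t → 0 ≤ ℓ' t ∧ ℓ' t < ε :=
  growth_rate_vanishes_near_boundary_general μ k ν ϑ ℓ₀ αstar αl αu hμ hk hϑ hℓ₀ hαl hαlu hαu α u ℓ
    ℓ' hℓrange hαC1 huC1 hflux hmom hu0 hstress hαbound hℓeq hℓnonneg
end

section
/- Energy identity for the cell velocity equation: let μ > 0, k > 0, α* ∈ (0,1), L > 0 and s ∈ ℝ. Suppose α, u : [0, L] → ℝ are continuously differentiable with 0 < α(x) < 1 for all x, the map x ↦ α(x)·u′(x) is differentiable, the equation −μ (α u′)′ + k α u/(1−α) = −(α Σ(α))′ holds on (0, L), u(0) = 0, and the stress boundary condition μ u′(L) − Σ(α(L)) = s holds. Then ∫₀^L k α(x) u(x)²/(1−α(x)) dx + ∫₀^L μ α(x) (u′(x))² dx = ∫₀^L α(x) Σ(α(x)) u′(x) dx + α(L) u(L) s. -/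
open Set intervalIntegral

theorem integral_mul_sq_add_integral_mul_deriv_eq_sub {a b : ℝ} (hab : a ≤ b)
    {c q u u' : ℝ → ℝ} (hq : ∀ x ∈ Ioo a b, HasDerivAt q (c x * u x) x)
    (hu : ∀ x ∈ Icc a b, HasDerivAt u (u' x) x) (hqc : ContinuousOn q (Icc a b))
    (hc : ContinuousOn c (Icc a b)) (hu'c : ContinuousOn u' (Icc a b)) :
    (∫ x in a..b, c x * u x ^ 2) + (∫ x in a..b, q x * u' x) = q b * u b - q a * u a := by
  have huc : ContinuousOn u (Icc a b) := HasDerivAt.continuousOn hu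
  have hcu : IntervalIntegrable (fun x => c x * u x ^ 2) MeasureTheory.volume a b :=
    (hc.mul (huc.pow 2)).intervalIntegrable_of_Icc hab
  have hqu : IntervalIntegrable (fun x => q x * u' x) MeasureTheory.volume a b :=
    (hqc.mul hu'c).intervalIntegrable_of_Icc hab
  rw [← integral_add hcu hqu]
  refine integral_eq_sub_of_hasDerivAt_of_le hab (hqc.mul huc) (fun x hx => ?_) (hcu.add hqu)
  exact ((hq x hx).mul (hu x (Ioo_subset_Icc_self hx))).congr_deriv (by ring)

theorem energy_identity_general
    (μ k αstar L s : ℝ)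
    (hL : 0 < L)
    (α u α' u' w v : ℝ → ℝ)
    (hα : ∀ x ∈ Set.Icc 0 L, HasDerivAt α (α' x) x)
    (hu : ∀ x ∈ Set.Icc 0 L, HasDerivAt u (u' x) x)
    (huc : ContinuousOn u' (Set.Icc 0 L))
    (hαrange : ∀ x ∈ Set.Icc 0 L, 0 < α x ∧ α x < 1)
    (hw : ∀ x ∈ Set.Icc 0 L, HasDerivAt (fun y => α y * u' y) (w x) x)
    (hv : ∀ x ∈ Set.Icc 0 L,
      HasDerivAt (fun y => α y * cellPressure αstar (α y)) (v x) x)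
    (heq : ∀ x ∈ Set.Ioo 0 L,
      -μ * w x + k * α x * u x / (1 - α x) = -v x)
    (hu0 : u 0 = 0)
    (hbc : μ * u' L - cellPressure αstar (α L) = s) :
    (∫ x in (0:ℝ)..L, k * α x * (u x) ^ 2 / (1 - α x))
      + (∫ x in (0:ℝ)..L, μ * α x * (u' x) ^ 2)
      = (∫ x in (0:ℝ)..L, α x * cellPressure αstar (α x) * u' x)
        + α L * u L * s := by
  set p : ℝ → ℝ := fun x => α x * cellPressure αstar (α x)
  have hαc : ContinuousOn α (Icc 0 L) := HasDerivAt.continuousOn hα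
  have hpc : ContinuousOn p (Icc 0 L) := HasDerivAt.continuousOn hv
  have hqc : ContinuousOn (fun x => μ * (α x * u' x) - p x) (Icc 0 L) :=
    (continuousOn_const.mul (HasDerivAt.continuousOn hw)).sub hpc
  have hdrag : ContinuousOn (fun x => k * α x / (1 - α x)) (Icc 0 L) :=
    (continuousOn_const.mul hαc).div (continuousOn_const.sub hαc)
      fun x hx => (sub_pos.2 (hαrange x hx).2).ne'
  have hq : ∀ x ∈ Ioo 0 L, HasDerivAt (fun x => μ * (α x * u' x) - p x)
      (k * α x / (1 - α x) * u x) x := fun x hx =>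
    (((hw x (Ioo_subset_Icc_self hx)).const_mul μ).sub (hv x (Ioo_subset_Icc_self hx))).congr_deriv
      (by linarith [heq x hx, mul_div_right_comm (k * α x) (u x) (1 - α x)])
  have energy := integral_mul_sq_add_integral_mul_deriv_eq_sub hL.le hq hu hqc hdrag huc
  have hsplit : (∫ x in (0:ℝ)..L, (μ * (α x * u' x) - p x) * u' x)
      = (∫ x in (0:ℝ)..L, μ * α x * u' x ^ 2) - ∫ x in (0:ℝ)..L, p x * u' x := by
    have hvisc : IntervalIntegrable (fun x => μ * α x * u' x ^ 2) MeasureTheory.volume 0 L :=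
      ((continuousOn_const.mul hαc).mul (huc.pow 2)).intervalIntegrable_of_Icc hL.le
    have hpu : IntervalIntegrable (fun x => p x * u' x) MeasureTheory.volume 0 L :=
      (hpc.mul huc).intervalIntegrable_of_Icc hL.le
    rw [← integral_sub hvisc hpu]
    congr 1 with x
    ring
  simp only [mul_div_right_comm _ (u _ ^ 2), hsplit, hu0, ← hbc] at energy ⊢
  linarith

/-- Energy identity for the cell velocity equation. -/
theorem energy_identity
    (μ k αstar L s : ℝ)
    (hμ : 0 < μ) (hk : 0 < k) (hαstar : αstar ∈ Set.Ioo (0 : ℝ) 1) (hL : 0 < L)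
    (α u α' u' w v : ℝ → ℝ)
    (hα : ∀ x ∈ Set.Icc 0 L, HasDerivAt α (α' x) x)
    (hαc : ContinuousOn α' (Set.Icc 0 L))
    (hu : ∀ x ∈ Set.Icc 0 L, HasDerivAt u (u' x) x)
    (huc : ContinuousOn u' (Set.Icc 0 L))
    (hαrange : ∀ x ∈ Set.Icc 0 L, 0 < α x ∧ α x < 1)
    (hw : ∀ x ∈ Set.Icc 0 L, HasDerivAt (fun y => α y * u' y) (w x) x)
    (hv : ∀ x ∈ Set.Icc 0 L,
      HasDerivAt (fun y => α y * cellPressure αstar (α y)) (v x) x)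
    (heq : ∀ x ∈ Set.Ioo 0 L,
      -μ * w x + k * α x * u x / (1 - α x) = -v x)
    (hu0 : u 0 = 0)
    (hbc : μ * u' L - cellPressure αstar (α L) = s) :
    (∫ x in (0:ℝ)..L, k * α x * (u x) ^ 2 / (1 - α x))
      + (∫ x in (0:ℝ)..L, μ * α x * (u' x) ^ 2)
      = (∫ x in (0:ℝ)..L, α x * cellPressure αstar (α x) * u' x)
        + α L * u L * s :=
  energy_identity_general μ k αstar L s hL α u α' u' w v hα hu huc hαrange hw hv heq hu0 hbc
end

section
/- Tumour elimination at the sub-packing steady state: let μ > 0, ϑ > ν ≥ 0, α* ∈ (0,1), and let α₀ : [0, ∞) → [0, 1) be continuous with α₀(t) → a as t → ∞ for some a ∈ [0, α*]. Suppose ℓ₁ : [0, ∞) → (0, ∞) is differentiable and satisfies μ ℓ₁′(t)/ℓ₁(t) = (ν − ϑ) + Σ(α₀(t)) for all t ≥ 0. Then (log ℓ₁(t))/t → (ν − ϑ)/μ < 0 as t → ∞, and ℓ₁(t) → 0 as t → ∞; i.e., the tumour is eliminated at rate −(ϑ − ν)/μ. -/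
open Filter Topology Asymptotics

theorem isLittleO_id_of_tendsto_deriv_zero {E : Type*} [NormedAddCommGroup E] [NormedSpace ℝ E]
    {f f' : ℝ → E} (hf : ∀ᶠ t in atTop, HasDerivAt f (f' t) t)
    (hf' : Tendsto f' atTop (𝓝 0)) : f =o[atTop] id := by
  rw [isLittleO_iff]
  intro c hc
  have hsmall : ∀ᶠ t in atTop, ‖f' t‖ ≤ c / 2 := by
    simpa using hf'.eventually (Metric.closedBall_mem_nhds 0 (half_pos hc))
  obtain ⟨T, hT⟩ := eventually_atTop.mp (hf.and (hsmall.and (eventually_ge_atTop 0)))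
  have hgrowth : ∀ t ≥ T, ‖f t - f T‖ ≤ c / 2 * (t - T) := fun t ht =>
    norm_image_sub_le_of_norm_deriv_le_segment'
      (fun s hs => (hT s hs.1).1.hasDerivWithinAt) (fun s hs => (hT s hs.1).2.1)
      t (Set.right_mem_Icc.mpr ht)
  filter_upwards [eventually_ge_atTop T, eventually_ge_atTop (2 * ‖f T‖ / c)] with t hTt hct
  have hT0 : 0 ≤ T := (hT T le_rfl).2.2
  have hfT : ‖f T‖ ≤ c / 2 * t := by
    rw [div_le_iff₀ hc] at hct
    linarith
  calc ‖f t‖ ≤ ‖f t - f T‖ + ‖f T‖ := norm_le_norm_sub_add _ _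
    _ ≤ c / 2 * (t - T) + c / 2 * t := add_le_add (hgrowth t hTt) hfT
    _ ≤ c * ‖id t‖ := by
      rw [id, Real.norm_of_nonneg (hT0.trans hTt)]
      nlinarith

theorem tendsto_div_self_of_tendsto_deriv {g g' : ℝ → ℝ} {L : ℝ}
    (hg : ∀ᶠ t in atTop, HasDerivAt g (g' t) t) (hg' : Tendsto g' atTop (𝓝 L)) :
    Tendsto (fun t => g t / t) atTop (𝓝 L) := by
  have hlin : (fun t => g t - L * t) =o[atTop] id :=
    isLittleO_id_of_tendsto_deriv_zero
      (hg.mono fun t ht => ht.sub ((hasDerivAt_id t).const_mul L))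
      (by simpa using hg'.sub_const L)
  have := (hlin.tendsto_div_nhds_zero.const_add L)
  rw [add_zero] at this
  refine this.congr' ?_
  filter_upwards [eventually_ne_atTop 0] with t ht
  rw [id, sub_div, mul_div_cancel_right₀ _ ht, add_sub_cancel]

theorem tendsto_zero_of_tendsto_log_div_self_neg {f : ℝ → ℝ} {L : ℝ} (hL : L < 0)
    (hpos : ∀ᶠ t in atTop, 0 < f t)
    (hrate : Tendsto (fun t => Real.log (f t) / t) atTop (𝓝 L)) :
    Tendsto f atTop (𝓝 0) := by
  have hlog : Tendsto (fun t => Real.log (f t)) atTop atBot := by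
    refine (hrate.neg_mul_atTop hL tendsto_id).congr' ?_
    filter_upwards [eventually_ne_atTop 0] with t ht
    exact div_mul_cancel₀ _ ht
  refine (Real.tendsto_exp_atBot.comp hlog).congr' ?_
  filter_upwards [hpos] with t ht
  exact Real.exp_log ht

theorem cellPressure_of_le {αstar a : ℝ} (h : a ≤ αstar) : cellPressure αstar a = 0 := by
  simp [cellPressure, max_eq_right (sub_nonpos.mpr h)]

theorem continuousAt_cellPressure {αstar a : ℝ} (h : a ≠ 1) :
    ContinuousAt (cellPressure αstar) a := by
  unfold cellPressure
  fun_prop (disch := exact pow_ne_zero 2 (sub_ne_zero.mpr h.symm))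

theorem tumour_elimination_sub_packing_general
    (μ ν ϑ αstar a : ℝ) (hμ : 0 < μ) (hνϑ : ν < ϑ)
    (hαstar : αstar ∈ Set.Ioo (0 : ℝ) 1)
    (α₀ : ℝ → ℝ)
    (ha : a ∈ Set.Icc (0 : ℝ) αstar)
    (hα₀lim : Filter.Tendsto α₀ Filter.atTop (nhds a))
    (ℓ₁ ℓ₁' : ℝ → ℝ)
    (hpos : ∀ t, 0 ≤ t → 0 < ℓ₁ t)
    (hder : ∀ t, 0 ≤ t → HasDerivAt ℓ₁ (ℓ₁' t) t)
    (heq : ∀ t, 0 ≤ t →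
      μ * ℓ₁' t / ℓ₁ t = (ν - ϑ) + cellPressure αstar (α₀ t)) :
    (Filter.Tendsto (fun t => Real.log (ℓ₁ t) / t) Filter.atTop
        (nhds ((ν - ϑ) / μ)) ∧ (ν - ϑ) / μ < 0) ∧
      Filter.Tendsto ℓ₁ Filter.atTop (nhds 0) := by
  have hrate_neg : (ν - ϑ) / μ < 0 := div_neg_of_neg_of_pos (sub_neg.mpr hνϑ) hμ
  have hpressure : Tendsto (fun t => cellPressure αstar (α₀ t)) atTop (𝓝 0) := by
    have hcont : ContinuousAt (cellPressure αstar) a :=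
      continuousAt_cellPressure (ha.2.trans_lt hαstar.2).ne
    simpa only [Function.comp_def, cellPressure_of_le ha.2] using hcont.tendsto.comp hα₀lim
  have hlogderiv : Tendsto (fun t => ℓ₁' t / ℓ₁ t) atTop (𝓝 ((ν - ϑ) / μ)) := by
    have := (hpressure.const_add (ν - ϑ)).div_const μ
    rw [add_zero] at this
    refine this.congr' ?_
    filter_upwards [eventually_ge_atTop 0] with t ht
    rw [← heq t ht, mul_div_assoc, mul_div_cancel_left₀ _ hμ.ne']
  have hlog : Tendsto (fun t => Real.log (ℓ₁ t) / t) atTop (𝓝 ((ν - ϑ) / μ)) :=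
    tendsto_div_self_of_tendsto_deriv
      (eventually_atTop.mpr ⟨0, fun t ht => (hder t ht).log (hpos t ht).ne'⟩) hlogderiv
  exact ⟨⟨hlog, hrate_neg⟩, tendsto_zero_of_tendsto_log_div_self_neg hrate_neg
    (eventually_atTop.mpr ⟨0, hpos⟩) hlog⟩

/-- Tumour elimination at the sub-packing steady state. -/
theorem tumour_elimination_sub_packing
    (μ ν ϑ αstar a : ℝ) (hμ : 0 < μ) (hν : 0 ≤ ν) (hνϑ : ν < ϑ)
    (hαstar : αstar ∈ Set.Ioo (0 : ℝ) 1)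
    (α₀ : ℝ → ℝ)
    (hα₀cont : ContinuousOn α₀ (Set.Ici 0))
    (hα₀range : ∀ t, 0 ≤ t → α₀ t ∈ Set.Ico (0 : ℝ) 1)
    (ha : a ∈ Set.Icc (0 : ℝ) αstar)
    (hα₀lim : Filter.Tendsto α₀ Filter.atTop (nhds a))
    (ℓ₁ ℓ₁' : ℝ → ℝ)
    (hpos : ∀ t, 0 ≤ t → 0 < ℓ₁ t)
    (hder : ∀ t, 0 ≤ t → HasDerivAt ℓ₁ (ℓ₁' t) t)
    (heq : ∀ t, 0 ≤ t →
      μ * ℓ₁' t / ℓ₁ t = (ν - ϑ) + cellPressure αstar (α₀ t)) :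
    (Filter.Tendsto (fun t => Real.log (ℓ₁ t) / t) Filter.atTop
        (nhds ((ν - ϑ) / μ)) ∧ (ν - ϑ) / μ < 0) ∧
      Filter.Tendsto ℓ₁ Filter.atTop (nhds 0) :=
  tumour_elimination_sub_packing_general μ ν ϑ αstar a hμ hνϑ hαstar α₀ ha hα₀lim ℓ₁ ℓ₁' hpos hder
    heq
end

section
/- Existence and uniqueness of the non-trivial steady-state volume fraction above packing density: let μ > 0, α* ∈ (0,1), and α_c > α*. Then there exists a unique α∞ with α* < α∞ < min(α_c, 1) such that α_c − α∞ = (α∞ − α*)/(μ (1 − α∞)²); moreover no α ∈ (α*, 1) outside (α*, min(α_c,1)) satisfies this equation. -/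
/-!
Clearing the denominator turns the steady-state equation on `(-∞, 1)` into the vanishing of
`μ (α_c - a) (1 - a)² - (a - α*)`. Below `min α_c 1` this residual is strictly decreasing, it is
positive at `α*` and negative at `min α_c 1` (where one factor of the first term vanishes), so it
has exactly one zero in between. Conversely, on `(α*, 1)` the right-hand side of the equation is
positive, which forces `a < α_c`.
-/

open Set

variable (μ αstar αc : ℝ)

def steadyResidual (a : ℝ) : ℝ := μ * (αc - a) * (1 - a) ^ 2 - (a - αstar)

variable {μ αstar αc}

theorem eq_div_iff_steadyResidual_eq_zero {a : ℝ} (hμ : μ ≠ 0) (ha : a ≠ 1) :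
    αc - a = (a - αstar) / (μ * (1 - a) ^ 2) ↔ steadyResidual μ αstar αc a = 0 := by
  have hden : μ * (1 - a) ^ 2 ≠ 0 := mul_ne_zero hμ (pow_ne_zero 2 (sub_ne_zero.mpr ha.symm))
  rw [eq_div_iff hden, steadyResidual, sub_eq_zero, mul_right_comm, mul_comm (αc - a)]

theorem steadyResidual_strictAntiOn (hμ : 0 ≤ μ) :
    StrictAntiOn (steadyResidual μ αstar αc) (Iic (min αc 1)) := by
  intro x _ y hy hxy
  have hxc : 0 ≤ αc - x := sub_nonneg.mpr (hxy.le.trans (hy.trans (min_le_left _ _)))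
  have hyc : 0 ≤ αc - y := sub_nonneg.mpr (hy.trans (min_le_left _ _))
  have hy1 : 0 ≤ 1 - y := sub_nonneg.mpr (hy.trans (min_le_right _ _))
  have hdecr : μ * (αc - y) * (1 - y) ^ 2 ≤ μ * (αc - x) * (1 - x) ^ 2 := by
    gcongr
  unfold steadyResidual
  linarith

theorem steadyResidual_pos (hμ : 0 < μ) (hαstar : αstar ≠ 1) (hαc : αstar < αc) :
    0 < steadyResidual μ αstar αc αstar := by
  have : 0 < μ * (αc - αstar) * (1 - αstar) ^ 2 := by
    have := sub_ne_zero.mpr hαstar.symm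
    positivity
  simpa [steadyResidual] using this

theorem steadyResidual_min_neg (h : αstar < min αc 1) :
    steadyResidual μ αstar αc (min αc 1) < 0 := by
  rcases min_choice αc 1 with hm | hm <;> rw [hm] at h ⊢ <;> simp [steadyResidual, h]

theorem lt_of_sub_eq_div {a : ℝ} (hμ : 0 < μ) (ha : a ∈ Ioo αstar 1)
    (heq : αc - a = (a - αstar) / (μ * (1 - a) ^ 2)) : a < αc := by
  have : 0 < (a - αstar) / (μ * (1 - a) ^ 2) := by
    have := sub_pos.mpr ha.1
    have := sub_pos.mpr ha.2
    positivity
  linarith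

/-- Existence and uniqueness of the non-trivial steady-state volume fraction above
packing density. -/
theorem steady_state_exists_unique_above_packing
    (μ αstar αc : ℝ) (hμ : 0 < μ) (hαstar : αstar ∈ Set.Ioo (0 : ℝ) 1)
    (hαc : αstar < αc) :
    (∃! a : ℝ, a ∈ Set.Ioo αstar (min αc 1) ∧
        αc - a = (a - αstar) / (μ * (1 - a) ^ 2)) ∧
      ∀ a ∈ Set.Ioo αstar (1 : ℝ),
        αc - a = (a - αstar) / (μ * (1 - a) ^ 2) →
          a ∈ Set.Ioo αstar (min αc 1) := by
  have hm : αstar < min αc 1 := lt_min hαc hαstar.2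
  have hne_one {a : ℝ} (ha : a ∈ Ioo αstar (min αc 1)) : a ≠ 1 :=
    (ha.2.trans_le (min_le_right _ _)).ne
  have hequiv {a : ℝ} (ha : a ∈ Ioo αstar (min αc 1)) :
      αc - a = (a - αstar) / (μ * (1 - a) ^ 2) ↔ steadyResidual μ αstar αc a = 0 :=
    eq_div_iff_steadyResidual_eq_zero hμ.ne' (hne_one ha)
  obtain ⟨a, ha, hzero⟩ : ∃ a ∈ Ioo αstar (min αc 1), steadyResidual μ αstar αc a = 0 :=
    intermediate_value_Ioo' hm.le (by unfold steadyResidual; fun_prop)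
      ⟨steadyResidual_min_neg hm, steadyResidual_pos hμ hαstar.2.ne hαc⟩
  refine ⟨⟨a, ⟨ha, (hequiv ha).mpr hzero⟩, fun b ⟨hb, hbeq⟩ => ?_⟩,
    fun b hb hbeq => ⟨hb.1, lt_min (lt_of_sub_eq_div hμ hb hbeq) hb.2⟩⟩
  exact (steadyResidual_strictAntiOn hμ.le).injOn
    (Iio_subset_Iic_self hb.2) (Iio_subset_Iic_self ha.2)
    (((hequiv hb).mp hbeq).trans hzero.symm)
end

section
/- Monotonicity of the steady-state volume fraction in the critical volume fraction: let μ > 0 and α* ∈ (0,1). Suppose α_{c1} ≥ α_{c2} > 0 and α₁, α₂ ∈ (0, 1) satisfy α_{c1} − α₁ = (α₁ − α*)⁺/(μ (1 − α₁)²) and α_{c2} − α₂ = (α₂ − α*)⁺/(μ (1 − α₂)²). Then α₁ ≥ α₂. -/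
/-! Below the pole at 1 the map `a ↦ a + (a - α*)⁺ / (μ (1 - a)²)` is strictly increasing, since its
second summand has a nondecreasing numerator and a nonincreasing positive denominator. A steady state
is a preimage of `α_c` under this map, so a smaller steady state would force a smaller `α_c`. -/

lemma monotoneOn_posPart_sub_div_mul_one_sub_sq {μ : ℝ} (hμ : 0 < μ) (s : ℝ) :
    MonotoneOn (fun a ↦ max (a - s) 0 / (μ * (1 - a) ^ 2)) (Set.Iio 1) := by
  intro a _ b (hb : b < 1) hab
  have hb' : 0 < 1 - b := by linarith
  have hden : μ * (1 - b) ^ 2 ≤ μ * (1 - a) ^ 2 := by gcongr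
  exact div_le_div₀ (le_max_right _ _) (max_le_max (by linarith) le_rfl) (by positivity) hden

lemma strictMonoOn_add_posPart_sub_div_mul_one_sub_sq {μ : ℝ} (hμ : 0 < μ) (s : ℝ) :
    StrictMonoOn (fun a ↦ a + max (a - s) 0 / (μ * (1 - a) ^ 2)) (Set.Iio 1) :=
  strictMonoOn_id.add_monotone (monotoneOn_posPart_sub_div_mul_one_sub_sq hμ s)

theorem steady_state_monotone_in_critical_fraction_general
    (μ αstar αc₁ αc₂ a₁ a₂ : ℝ) (hμ : 0 < μ)
    (hc : αc₂ ≤ αc₁)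
    (ha₂ : a₂ ∈ Set.Ioo (0 : ℝ) 1)
    (he₁ : αc₁ - a₁ = max (a₁ - αstar) 0 / (μ * (1 - a₁) ^ 2))
    (he₂ : αc₂ - a₂ = max (a₂ - αstar) 0 / (μ * (1 - a₂) ^ 2)) :
    a₂ ≤ a₁ := by
  refine le_of_not_gt fun h ↦ ?_
  have hlt := strictMonoOn_add_posPart_sub_div_mul_one_sub_sq hμ αstar
    (h.trans ha₂.2) ha₂.2 h
  simp only at hlt
  linarith

/-- Monotonicity of the steady-state volume fraction in the critical volume fraction. -/
theorem steady_state_monotone_in_critical_fraction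
    (μ αstar αc₁ αc₂ a₁ a₂ : ℝ) (hμ : 0 < μ)
    (hαstar : αstar ∈ Set.Ioo (0 : ℝ) 1)
    (hc₂ : 0 < αc₂) (hc : αc₂ ≤ αc₁)
    (ha₁ : a₁ ∈ Set.Ioo (0 : ℝ) 1) (ha₂ : a₂ ∈ Set.Ioo (0 : ℝ) 1)
    (he₁ : αc₁ - a₁ = max (a₁ - αstar) 0 / (μ * (1 - a₁) ^ 2))
    (he₂ : αc₂ - a₂ = max (a₂ - αstar) 0 / (μ * (1 - a₂) ^ 2)) :
    a₂ ≤ a₁ :=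
  steady_state_monotone_in_critical_fraction_general μ αstar αc₁ αc₂ a₁ a₂ hμ hc ha₂ he₁ he₂
end

section
/- Monotonicity of the steady-state volume fraction in the hydrogel stiffness: let μ > 0, κ ∈ (0,1), α* ∈ (0,1), ν ≥ 0, and define α_c(ϑ) = 1 − κ + (ϑ − ν)/μ. Suppose ϑ₁ ≥ ϑ₂ ≥ ν and α₁, α₂ ∈ (0, 1) satisfy α_c(ϑᵢ) − αᵢ = (αᵢ − α*)⁺/(μ (1 − αᵢ)²) for i = 1, 2. Then α₁ ≥ α₂; i.e., stiffer hydrogels produce larger steady-state cell volume fractions. -/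
/-!
A steady state solves `a + Σ(a)/μ = α_c(ϑ)`. Below `a = 1` the stress `Σ` is monotone (its
numerator grows and its denominator shrinks), so the left-hand side is strictly increasing in `a`,
while `α_c` is nondecreasing in `ϑ`; hence the steady state moves right as `ϑ` grows.
-/

open Set

lemma monotoneOn_posPart_div_sq {μ : ℝ} (hμ : 0 < μ) (s : ℝ) :
    MonotoneOn (fun a => max (a - s) 0 / (μ * (1 - a) ^ 2)) (Iio 1) := by
  intro a _ b hb hab
  have hb_pos : 0 < 1 - b := sub_pos.mpr hb
  have hnum : max (a - s) 0 ≤ max (b - s) 0 := max_le_max (by linarith) le_rfl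
  have hden : μ * (1 - b) ^ 2 ≤ μ * (1 - a) ^ 2 := by gcongr
  exact div_le_div₀ (le_max_right _ _) hnum (by positivity) hden

lemma strictMonoOn_add_posPart_div_sq {μ : ℝ} (hμ : 0 < μ) (s : ℝ) :
    StrictMonoOn (fun a => a + max (a - s) 0 / (μ * (1 - a) ^ 2)) (Iio 1) :=
  strictMonoOn_id.add_monotone (monotoneOn_posPart_div_sq hμ s)

theorem steady_state_monotone_in_stiffness_general
    (μ κ αstar ν ϑ₁ ϑ₂ a₁ a₂ : ℝ) (hμ : 0 < μ)
    (hϑ : ϑ₂ ≤ ϑ₁)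
    (ha₂ : a₂ ∈ Set.Ioo (0 : ℝ) 1)
    (he₁ : (1 - κ + (ϑ₁ - ν) / μ) - a₁ = max (a₁ - αstar) 0 / (μ * (1 - a₁) ^ 2))
    (he₂ : (1 - κ + (ϑ₂ - ν) / μ) - a₂ = max (a₂ - αstar) 0 / (μ * (1 - a₂) ^ 2)) :
    a₂ ≤ a₁ := by
  by_contra! h
  have hsteady := strictMonoOn_add_posPart_div_sq hμ αstar (h.trans ha₂.2) ha₂.2 h
  have hcrit : (ϑ₂ - ν) / μ ≤ (ϑ₁ - ν) / μ :=
    div_le_div_of_nonneg_right (by linarith) hμ.le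
  linarith

/-- Monotonicity of the steady-state volume fraction in the hydrogel stiffness:
with `α_c(ϑ) = 1 − κ + (ϑ − ν)/μ`, stiffer hydrogels produce larger steady-state
cell volume fractions. -/
theorem steady_state_monotone_in_stiffness
    (μ κ αstar ν ϑ₁ ϑ₂ a₁ a₂ : ℝ) (hμ : 0 < μ)
    (hκ : κ ∈ Set.Ioo (0 : ℝ) 1)
    (hαstar : αstar ∈ Set.Ioo (0 : ℝ) 1)
    (hν : 0 ≤ ν) (hϑ₂ : ν ≤ ϑ₂) (hϑ : ϑ₂ ≤ ϑ₁)
    (ha₁ : a₁ ∈ Set.Ioo (0 : ℝ) 1) (ha₂ : a₂ ∈ Set.Ioo (0 : ℝ) 1)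
    (he₁ : (1 - κ + (ϑ₁ - ν) / μ) - a₁ = max (a₁ - αstar) 0 / (μ * (1 - a₁) ^ 2))
    (he₂ : (1 - κ + (ϑ₂ - ν) / μ) - a₂ = max (a₂ - αstar) 0 / (μ * (1 - a₂) ^ 2)) :
    a₂ ≤ a₁ :=
  steady_state_monotone_in_stiffness_general μ κ αstar ν ϑ₁ ϑ₂ a₁ a₂ hμ hϑ ha₂ he₁ he₂
end

section
/- Negative asymptotic growth rate at the supra-packing steady state: let μ > 0, ϑ ≥ ν ≥ 0, α* ∈ (0,1), and α_c > α*. Suppose α∞ ∈ (α*, 1) satisfies the steady-state equation α_c − α∞ = (α∞ − α*)/(μ (1 − α∞)²). Then the asymptotic specific growth rate of the tumour length, r := (ν − ϑ)/μ + (α∞ − α*)/(μ (1 − α∞)²), equals α_c − α∞ − (ϑ − ν)/μ and satisfies r < α_c − α* − (ϑ − ν)/μ. In particular, if α_c ≤ α* + (ϑ − ν)/μ, then r < 0 and the tumour decays. -/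
theorem negative_growth_rate_supra_packing_general
    (μ ν ϑ αstar αc aInf : ℝ)
    (ha : aInf ∈ Set.Ioo αstar 1)
    (hss : αc - aInf = (aInf - αstar) / (μ * (1 - aInf) ^ 2)) :
    ((ν - ϑ) / μ + (aInf - αstar) / (μ * (1 - aInf) ^ 2)
        = αc - aInf - (ϑ - ν) / μ) ∧
      ((ν - ϑ) / μ + (aInf - αstar) / (μ * (1 - aInf) ^ 2)
        < αc - αstar - (ϑ - ν) / μ) ∧
      (αc ≤ αstar + (ϑ - ν) / μ →
        (ν - ϑ) / μ + (aInf - αstar) / (μ * (1 - aInf) ^ 2) < 0) := by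
  have hrate : (ν - ϑ) / μ + (aInf - αstar) / (μ * (1 - aInf) ^ 2)
      = αc - aInf - (ϑ - ν) / μ := by
    rw [← hss]; ring
  have hlt : αc - aInf - (ϑ - ν) / μ < αc - αstar - (ϑ - ν) / μ := by
    linarith [ha.1]
  exact ⟨hrate, hrate ▸ hlt, fun hle => by linarith⟩

/-- Negative asymptotic growth rate at the supra-packing steady state. -/
theorem negative_growth_rate_supra_packing
    (μ ν ϑ αstar αc aInf : ℝ) (hμ : 0 < μ) (hν : 0 ≤ ν) (hνϑ : ν ≤ ϑ)
    (hαstar : αstar ∈ Set.Ioo (0 : ℝ) 1) (hαc : αstar < αc)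
    (ha : aInf ∈ Set.Ioo αstar 1)
    (hss : αc - aInf = (aInf - αstar) / (μ * (1 - aInf) ^ 2)) :
    ((ν - ϑ) / μ + (aInf - αstar) / (μ * (1 - aInf) ^ 2)
        = αc - aInf - (ϑ - ν) / μ) ∧
      ((ν - ϑ) / μ + (aInf - αstar) / (μ * (1 - aInf) ^ 2)
        < αc - αstar - (ϑ - ν) / μ) ∧
      (αc ≤ αstar + (ϑ - ν) / μ →
        (ν - ϑ) / μ + (aInf - αstar) / (μ * (1 - aInf) ^ 2) < 0) :=
  negative_growth_rate_supra_packing_general μ ν ϑ αstar αc aInf ha hss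
end
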